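/- arXiv:2205.05001 — 4 statements merged into one kernel-verified Lean document; each statement's English description precedes it below -/
import Mathlib

section
/- Let G be a finite simple graph on vertex set V. For each vertex v, let s_v : V → Bool be the indicator of the closed neighborhood of v (s_v u = true iff u = v or u is adjacent to v), and let s₀ be the all-false assignment. Suppose D ⊆ V is a dominating set of G with |D| ≤ k. Then the decision list whose conditions are the positive literals (d, true) for d ∈ D (in any order), each with action 1, and with default action 0, satisfies all requirements: it outputs 1 on s_v for every v ∈ V, and outputs 0 on s₀. -/
structure DecisionList (V : Type) (A : Type) where
  entries : List ((V × Bool) × A)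
  dflt : A

def DecisionList.eval {V A : Type} (L : DecisionList V A) (s : V → Bool) : A :=
  match L.entries.find? (fun e => s e.1.1 == e.1.2) with
  | some e => e.2
  | none => L.dflt

theorem DecisionList.eval_map_positive {V A : Type} (ds : List V) (a b : A) (s : V → Bool) :
    DecisionList.eval ⟨ds.map (fun d => ((d, true), a)), b⟩ s =
      if ∃ d ∈ ds, s d = true then a else b := by
  induction ds with
  | nil => simp [DecisionList.eval]
  | cons d ds ih =>
    unfold DecisionList.eval at ih ⊢
    by_cases hd : s d = true
    · simp [hd]
    · simpa [hd] using ih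

theorem stmt2_general {V : Type} [DecidableEq V] (G : SimpleGraph V)
    [DecidableRel G.Adj] (D : Finset V)
    (hdom : ∀ v : V, ∃ d ∈ D, d = v ∨ G.Adj v d)
    (ds : List V) (hds : ∀ d, d ∈ ds ↔ d ∈ D) :
    (∀ v : V,
      DecisionList.eval ⟨ds.map (fun d => ((d, true), (1 : ℕ))), 0⟩
        (fun u => decide (u = v ∨ G.Adj v u)) = 1) ∧
    DecisionList.eval ⟨ds.map (fun d => ((d, true), (1 : ℕ))), 0⟩
      (fun _ => false) = 0 := by
  refine ⟨fun v => ?_, by simp [DecisionList.eval_map_positive]⟩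
  obtain ⟨d, hdD, hdv⟩ := hdom v
  rw [DecisionList.eval_map_positive, if_pos ⟨d, (hds d).mpr hdD, by simpa using hdv⟩]

theorem stmt2 {V : Type} [Fintype V] [DecidableEq V] (G : SimpleGraph V)
    [DecidableRel G.Adj] (k : ℕ) (D : Finset V)
    (hdom : ∀ v : V, ∃ d ∈ D, d = v ∨ G.Adj v d) (hcard : D.card ≤ k)
    (ds : List V) (hds : ∀ d, d ∈ ds ↔ d ∈ D) (hnd : ds.Nodup) :
    (∀ v : V,
      DecisionList.eval ⟨ds.map (fun d => ((d, true), (1 : ℕ))), 0⟩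
        (fun u => decide (u = v ∨ G.Adj v u)) = 1) ∧
    DecisionList.eval ⟨ds.map (fun d => ((d, true), (1 : ℕ))), 0⟩
      (fun _ => false) = 0 :=
  stmt2_general G D hdom ds hds
end

section
/- Let G be a finite simple graph on vertex set V, and define requirements as follows: for each vertex v, the assignment s_v (indicator of the closed neighborhood of v) must yield output 1, and the all-false assignment s₀ must yield output 0. If a decision list all of whose condition literals are positive has at most k conditions and satisfies all these requirements, then G has a dominating set of size at most k. -/
/-!
The variables occurring in the conditions of `L` form the dominating set. A list with only
positive literals evaluates to its default on the all-false assignment, so its default is `0`;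
hence on `s_v` some condition must fire, i.e. some condition variable lies in the closed
neighborhood of `v`.
-/

namespace DecisionList

variable {V A : Type}

def vars [DecidableEq V] (L : DecisionList V A) : Finset V :=
  (L.entries.map fun e => e.1.1).toFinset

theorem card_vars_le_length [DecidableEq V] (L : DecisionList V A) :
    L.vars.card ≤ L.entries.length :=
  (List.toFinset_card_le _).trans (List.length_map _).le

theorem eval_eq_dflt_of_find?_eq_none {L : DecisionList V A} {s : V → Bool}
    (h : L.entries.find? (fun e => s e.1.1 == e.1.2) = none) : L.eval s = L.dflt := by
  rw [eval, h]

theorem exists_mem_entries_of_eval_ne_dflt {L : DecisionList V A} {s : V → Bool}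
    (h : L.eval s ≠ L.dflt) : ∃ e ∈ L.entries, s e.1.1 = e.1.2 := by
  cases hfind : L.entries.find? (fun e => s e.1.1 == e.1.2) with
  | none => exact absurd (eval_eq_dflt_of_find?_eq_none hfind) h
  | some e =>
    exact ⟨e, List.mem_of_find?_eq_some hfind, by simpa using List.find?_some hfind⟩

theorem eval_false_eq_dflt {L : DecisionList V A} (hpos : ∀ e ∈ L.entries, e.1.2 = true) :
    L.eval (fun _ => false) = L.dflt := by
  refine eval_eq_dflt_of_find?_eq_none (List.find?_eq_none.mpr fun e he => ?_)
  simp [hpos e he]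

theorem exists_mem_vars_of_eval_ne_eval_false [DecidableEq V] {L : DecisionList V A}
    (hpos : ∀ e ∈ L.entries, e.1.2 = true) {s : V → Bool}
    (h : L.eval s ≠ L.eval (fun _ => false)) : ∃ x ∈ L.vars, s x = true := by
  rw [eval_false_eq_dflt hpos] at h
  obtain ⟨e, he, hs⟩ := exists_mem_entries_of_eval_ne_dflt h
  exact ⟨e.1.1, List.mem_toFinset.mpr (List.mem_map_of_mem he), hs.trans (hpos e he)⟩

end DecisionList

theorem stmt3_general {V : Type} [DecidableEq V] (G : SimpleGraph V)
    [DecidableRel G.Adj] (k : ℕ) (L : DecisionList V ℕ)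
    (hpos : ∀ e ∈ L.entries, e.1.2 = true)
    (hlen : L.entries.length ≤ k)
    (hreq1 : ∀ v : V, L.eval (fun u => decide (u = v ∨ G.Adj v u)) = 1)
    (hreq0 : L.eval (fun _ => false) = 0) :
    ∃ D : Finset V, D.card ≤ k ∧ ∀ v : V, ∃ d ∈ D, d = v ∨ G.Adj v d := by
  refine ⟨L.vars, L.card_vars_le_length.trans hlen, fun v => ?_⟩
  have hne : L.eval (fun u => decide (u = v ∨ G.Adj v u)) ≠ L.eval (fun _ => false) := by
    rw [hreq1 v, hreq0]
    exact one_ne_zero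
  obtain ⟨d, hd, hdv⟩ := DecisionList.exists_mem_vars_of_eval_ne_eval_false hpos hne
  exact ⟨d, hd, of_decide_eq_true hdv⟩

theorem stmt3 {V : Type} [Fintype V] [DecidableEq V] (G : SimpleGraph V)
    [DecidableRel G.Adj] (k : ℕ) (L : DecisionList V ℕ)
    (hpos : ∀ e ∈ L.entries, e.1.2 = true)
    (hlen : L.entries.length ≤ k)
    (hreq1 : ∀ v : V, L.eval (fun u => decide (u = v ∨ G.Adj v u)) = 1)
    (hreq0 : L.eval (fun _ => false) = 0) :
    ∃ D : Finset V, D.card ≤ k ∧ ∀ v : V, ∃ d ∈ D, d = v ∨ G.Adj v d :=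
  stmt3_general G k L hpos hlen hreq1 hreq0
end

section
/- Let G be a finite simple graph on vertex set V with requirements as in the Dominating Set reduction (output 1 on each closed-neighborhood indicator s_v, output 0 on the all-false assignment s₀), and suppose a decision list L with at most k conditions satisfies all requirements. If c is the first negated condition literal of L, C is the set of variables of the positive condition literals occurring before c, and every requirement s_v with v not dominated by a vertex of C is still unrecognized at c, then the set C together with the variable of c contains a dominating set of G of size at most k. -/
/-!
Let `c` sit at position `ic`. The all-false requirement satisfies every negated literal and no
positive one, so it is recognized at `c`, whence `c` carries action `0`. A requirement `s_v`
recognized at `c` would also get action `0` instead of `1`; since `s_v` fails all positive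
literals before `c` whenever `v` is not dominated by `C`, it must fail `c` too, i.e. the variable
of `c` dominates `v`. So `C ∪ {c}` is dominating, and it has at most `ic + 1 ≤ |L| ≤ k` elements.
-/

theorem DecisionList.eval_eq_of_getElem? {V A : Type} {L : DecisionList V A} {s : V → Bool}
    {i : ℕ} {e : (V × Bool) × A} (he : L.entries[i]? = some e)
    (hbefore : ∀ j < i, ∀ e', L.entries[j]? = some e' → s e'.1.1 ≠ e'.1.2)
    (hsat : s e.1.1 = e.1.2) :
    L.eval s = e.2 := by
  obtain ⟨hi, rfl⟩ := List.getElem?_eq_some_iff.1 he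
  have hfind : L.entries.find? (fun e => s e.1.1 == e.1.2) = some L.entries[i] := by
    refine List.find?_eq_some_iff_getElem.2 ⟨by simpa using hsat, i, hi, rfl, fun j hj => ?_⟩
    simpa using hbefore j hj _ (List.getElem?_eq_getElem (hj.trans hi))
  simp only [DecisionList.eval, hfind]

theorem List.card_insert_toFinset_le {α : Type*} [DecidableEq α] (a : α) (l : List α) :
    (insert a l.toFinset).card ≤ l.length + 1 :=
  (Finset.card_insert_le _ _).trans (Nat.add_le_add_right l.toFinset_card_le 1)

theorem stmt13_general {V : Type} [DecidableEq V] (G : SimpleGraph V)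
    [DecidableRel G.Adj] (k : ℕ) (L : DecisionList V ℕ)
    (hk : L.entries.length ≤ k)
    (hreq1 : ∀ v : V, L.eval (fun u => decide (u = v ∨ G.Adj v u)) = 1)
    (hreq0 : L.eval (fun _ => false) = 0)
    (ic : ℕ) (c : (V × Bool) × ℕ)
    (hc : L.entries[ic]? = some c) (hcneg : c.1.2 = false)
    (hpos : ∀ i < ic, ∀ e, L.entries[i]? = some e → e.1.2 = true)
    (hunrec : ∀ v : V,
      (¬ ∃ u ∈ (L.entries.take ic).map (fun e => e.1.1), u = v ∨ G.Adj v u) →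
      ∀ i < ic, ∀ e, L.entries[i]? = some e →
        ¬ ((fun u => decide (u = v ∨ G.Adj v u)) e.1.1 = e.1.2)) :
    ∃ D : Finset V,
      D ⊆ insert c.1.1 ((L.entries.take ic).map (fun e => e.1.1)).toFinset ∧
      D.card ≤ k ∧ ∀ v : V, ∃ d ∈ D, d = v ∨ G.Adj v d := by
  have hrecog : ∀ s : V → Bool, (∀ i < ic, ∀ e, L.entries[i]? = some e → s e.1.1 ≠ e.1.2) →
      s c.1.1 = false → L.eval s = c.2 :=
    fun s hbefore hs => DecisionList.eval_eq_of_getElem? hc hbefore (hs.trans hcneg.symm)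
  have hc0 : c.2 = 0 :=
    hreq0 ▸ (hrecog _ (fun i hi e he => by simp [hpos i hi e he]) rfl).symm
  refine ⟨_, subset_rfl, ?_, fun v => ?_⟩
  · have hic : ic < L.entries.length := (List.getElem?_eq_some_iff.1 hc).1
    have hlen : ((L.entries.take ic).map (fun e => e.1.1)).length ≤ ic := by simp
    have hcard := List.card_insert_toFinset_le c.1.1 ((L.entries.take ic).map (fun e => e.1.1))
    omega
  by_cases hdom : ∃ u ∈ (L.entries.take ic).map (fun e => e.1.1), u = v ∨ G.Adj v u
  · obtain ⟨u, hu, huv⟩ := hdom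
    exact ⟨u, Finset.mem_insert_of_mem (List.mem_toFinset.2 hu), huv⟩
  · refine ⟨c.1.1, Finset.mem_insert_self _ _, by_contra fun hnd => ?_⟩
    have hrecv := hrecog (fun u => decide (u = v ∨ G.Adj v u)) (hunrec v hdom)
      (decide_eq_false hnd)
    rw [hreq1 v, hc0] at hrecv
    exact one_ne_zero hrecv

theorem stmt13 {V : Type} [Fintype V] [DecidableEq V] (G : SimpleGraph V)
    [DecidableRel G.Adj] (k : ℕ) (L : DecisionList V ℕ)
    (hk : L.entries.length ≤ k)
    (hreq1 : ∀ v : V, L.eval (fun u => decide (u = v ∨ G.Adj v u)) = 1)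
    (hreq0 : L.eval (fun _ => false) = 0)
    (ic : ℕ) (c : (V × Bool) × ℕ)
    (hc : L.entries[ic]? = some c) (hcneg : c.1.2 = false)
    (hpos : ∀ i < ic, ∀ e, L.entries[i]? = some e → e.1.2 = true)
    (hunrec : ∀ v : V,
      (¬ ∃ u ∈ (L.entries.take ic).map (fun e => e.1.1), u = v ∨ G.Adj v u) →
      ∀ i < ic, ∀ e, L.entries[i]? = some e →
        ¬ ((fun u => decide (u = v ∨ G.Adj v u)) e.1.1 = e.1.2)) :
    ∃ D : Finset V,
      D ⊆ insert c.1.1 ((L.entries.take ic).map (fun e => e.1.1)).toFinset ∧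
      D.card ≤ k ∧ ∀ v : V, ∃ d ∈ D, d = v ∨ G.Adj v d :=
  stmt13_general G k L hk hreq1 hreq0 ic c hc hcneg hpos hunrec
end

section
/- Let V be a finite type, S a finite set of assignments V → Bool, and r : S → A a required action for each assignment, where A is a finite action type. If there exists any decision list over V with at most k conditions satisfying r on all of S, then there exists one in which no two condition literals are equal and no condition at a position after a complementary pair of literals appears; in particular there exists a satisfying decision list with at most min(k, 2·|V|) conditions. -/
/-!
Scan the list while remembering the literals already passed: an entry whose literal occurred
before can never be the first satisfied one and is dropped, and an entry whose complement occurred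
before is satisfied by every assignment that reaches it, so the scan stops after it. This preserves
the computed function and does not lengthen the list. In the result the literals are distinct and
the entries before the last one have distinct variables, so it has at most `|V × Bool| = 2|V|`
entries.
-/

namespace List

variable {α : Type*}

theorem mem_of_mem_dropLast_cons {x a : α} {l : List α} (h : x ∈ (a :: l).dropLast) :
    x = a ∨ x ∈ l.dropLast := by
  cases l with
  | nil => simp at h
  | cons b t => exact mem_cons.1 (dropLast_cons_cons ▸ h)

theorem pairwise_dropLast_cons {R : α → α → Prop} {a : α} {l : List α}
    (ha : ∀ x ∈ l.dropLast, R a x) (hl : l.dropLast.Pairwise R) :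
    (a :: l).dropLast.Pairwise R := by
  cases l with
  | nil => simp
  | cons b t => exact dropLast_cons_cons ▸ pairwise_cons.2 ⟨ha, hl⟩

theorem Pairwise.rel_getElem_of_dropLast {R : α → α → Prop} {l : List α}
    (h : l.dropLast.Pairwise R) {i j : ℕ} (hij : i < j) (hj : j + 1 < l.length) :
    R (l[i]'(by omega)) (l[j]'(by omega)) := by
  have hjd : j < l.dropLast.length := by rw [length_dropLast]; omega
  simpa using pairwise_iff_getElem.1 h i j (hij.trans hjd) hjd hij

end List

theorem Prod.eq_or_eq_not_of_fst_eq {V : Type*} {p q : V × Bool} (h : p.1 = q.1) :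
    p = q ∨ p = (q.1, !q.2) := by
  obtain ⟨v, b⟩ := p
  obtain ⟨w, c⟩ := q
  cases b <;> cases c <;> simp_all

namespace DecisionList

variable {V A : Type} [DecidableEq V]

def pruneEntries : List ((V × Bool) × A) → List (V × Bool) → List ((V × Bool) × A)
  | [], _ => []
  | e :: es, seen =>
    if e.1 ∈ seen then pruneEntries es seen
    else if (e.1.1, !e.1.2) ∈ seen then [e]
    else e :: pruneEntries es (e.1 :: seen)

def prune (L : DecisionList V A) : DecisionList V A :=
  ⟨pruneEntries L.entries [], L.dflt⟩

theorem length_pruneEntries_le (es : List ((V × Bool) × A)) (seen : List (V × Bool)) :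
    (pruneEntries es seen).length ≤ es.length := by
  induction es generalizing seen with
  | nil => simp [pruneEntries]
  | cons e es ih =>
    simp only [pruneEntries]
    split_ifs
    · exact (ih seen).trans (Nat.le_succ _)
    · simp
    · simpa using ih (e.1 :: seen)

theorem find?_pruneEntries (es : List ((V × Bool) × A)) (seen : List (V × Bool))
    (s : V → Bool) (hseen : ∀ l ∈ seen, s l.1 ≠ l.2) :
    (pruneEntries es seen).find? (fun e => s e.1.1 == e.1.2)
      = es.find? (fun e => s e.1.1 == e.1.2) := by
  induction es generalizing seen with
  | nil => rfl
  | cons e es ih =>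
    simp only [pruneEntries]
    split_ifs with h_seen h_compl
    · rw [List.find?_cons_of_neg (by simpa using hseen _ h_seen)]
      exact ih seen hseen
    · have hs : s e.1.1 = e.1.2 := by simpa using hseen _ h_compl
      rw [List.find?_cons_of_pos (by simpa using hs), List.find?_cons_of_pos (by simpa using hs)]
    · by_cases hs : s e.1.1 = e.1.2
      · rw [List.find?_cons_of_pos (by simpa using hs), List.find?_cons_of_pos (by simpa using hs)]
      · rw [List.find?_cons_of_neg (by simpa using hs), List.find?_cons_of_neg (by simpa using hs)]
        refine ih (e.1 :: seen) ?_
        rintro l (_ | ⟨_, hl⟩)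
        exacts [hs, hseen l hl]

theorem fst_not_mem_of_mem_pruneEntries {es : List ((V × Bool) × A)} {seen : List (V × Bool)}
    {e : (V × Bool) × A} (he : e ∈ pruneEntries es seen) : e.1 ∉ seen := by
  induction es generalizing seen with
  | nil => simp [pruneEntries] at he
  | cons x es ih =>
    simp only [pruneEntries] at he
    split_ifs at he with h_seen h_compl
    · exact ih he
    · simp_all
    · rcases List.mem_cons.1 he with rfl | he
      · exact h_seen
      · exact fun h => ih he (List.mem_cons_of_mem _ h)

theorem compl_not_mem_of_mem_dropLast_pruneEntries {es : List ((V × Bool) × A)}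
    {seen : List (V × Bool)} {e : (V × Bool) × A} (he : e ∈ (pruneEntries es seen).dropLast) :
    (e.1.1, !e.1.2) ∉ seen := by
  induction es generalizing seen with
  | nil => simp [pruneEntries] at he
  | cons x es ih =>
    simp only [pruneEntries] at he
    split_ifs at he with h_seen h_compl
    · exact ih he
    · simp at he
    · rcases List.mem_of_mem_dropLast_cons he with rfl | he
      · exact h_compl
      · exact fun h => ih he (List.mem_cons_of_mem _ h)

theorem nodup_map_fst_pruneEntries (es : List ((V × Bool) × A)) (seen : List (V × Bool)) :
    ((pruneEntries es seen).map (·.1)).Nodup := by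
  induction es generalizing seen with
  | nil => simp [pruneEntries]
  | cons e es ih =>
    simp only [pruneEntries]
    split_ifs
    · exact ih seen
    · simp
    · refine List.nodup_cons.2 ⟨?_, ih _⟩
      simp only [List.mem_map, not_exists, not_and]
      exact fun x hx hxe => fst_not_mem_of_mem_pruneEntries hx (hxe ▸ List.mem_cons_self)

theorem pairwise_dropLast_pruneEntries (es : List ((V × Bool) × A)) (seen : List (V × Bool)) :
    (pruneEntries es seen).dropLast.Pairwise (fun e₁ e₂ => e₁.1.1 ≠ e₂.1.1) := by
  induction es generalizing seen with
  | nil => simp [pruneEntries]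
  | cons e es ih =>
    simp only [pruneEntries]
    split_ifs
    · exact ih seen
    · simp
    · refine List.pairwise_dropLast_cons (fun x hx hvar => ?_) (ih _)
      -- `x` carries neither the literal of `e` nor its complement, so not its variable either
      rcases Prod.eq_or_eq_not_of_fst_eq hvar.symm with h | h
      · exact fst_not_mem_of_mem_pruneEntries (List.mem_of_mem_dropLast hx) (h ▸ List.mem_cons_self)
      · refine compl_not_mem_of_mem_dropLast_pruneEntries hx ?_
        simp [h]

theorem eval_prune (L : DecisionList V A) (s : V → Bool) : L.prune.eval s = L.eval s := by
  simp only [eval, prune, find?_pruneEntries _ [] s (by simp)]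

end DecisionList

theorem stmt15 {V A : Type} [Fintype V] (S : Set (V → Bool))
    (r : (V → Bool) → A) (k : ℕ)
    (h : ∃ L : DecisionList V A, L.entries.length ≤ k ∧ ∀ s ∈ S, L.eval s = r s) :
    ∃ L : DecisionList V A,
      (L.entries.map (fun e => e.1)).Nodup ∧
      (∀ i j, i < j → j + 1 < L.entries.length → ∀ e1 e2,
        L.entries[i]? = some e1 → L.entries[j]? = some e2 →
        ¬ (e1.1.1 = e2.1.1 ∧ e1.1.2 = !e2.1.2)) ∧
      L.entries.length ≤ min k (2 * Fintype.card V) ∧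
      ∀ s ∈ S, L.eval s = r s := by
  classical
  obtain ⟨L, hk, hS⟩ := h
  have hnodup : (L.prune.entries.map (·.1)).Nodup :=
    DecisionList.nodup_map_fst_pruneEntries L.entries []
  have hdistinct : L.prune.entries.dropLast.Pairwise (fun e₁ e₂ => e₁.1.1 ≠ e₂.1.1) :=
    DecisionList.pairwise_dropLast_pruneEntries L.entries []
  refine ⟨L.prune, hnodup, ?_, le_min ?_ ?_, fun s hs => (L.eval_prune s).trans (hS s hs)⟩
  · intro i j hij hj e₁ e₂ h₁ h₂ ⟨hvar, _⟩
    rw [List.getElem?_eq_getElem (by omega), Option.some_inj] at h₁ h₂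
    exact hdistinct.rel_getElem_of_dropLast hij hj (h₁ ▸ h₂ ▸ hvar)
  · exact (DecisionList.length_pruneEntries_le _ _).trans hk
  · simpa [Fintype.card_prod, mul_comm] using hnodup.length_le_card
end
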